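/- arXiv:2303.11865 — 3 statements merged into one kernel-verified Lean document; each statement's English description precedes it below -/
import Mathlib

section
/- Let R_a > 0, R ∈ (0, R_a), and let f : ℝ → ℝ be continuous with f(z) = 0 for all z ≥ R_a. Define P(z) := −∫_R^z f(y) dy and V(x̄) := Σ_{1 ≤ i < j ≤ n} P(‖x_i − x_j‖). Let x_1, …, x_n : [0, T) → ℝ² be differentiable curves with x_1(t), …, x_n(t) pairwise distinct for every t, satisfying ẋ_i(t) = Σ_{j ≠ i} f(‖x_i(t) − x_j(t)‖) · (x_i(t) − x_j(t))/‖x_i(t) − x_j(t)‖ for every i and t. Then t ↦ V(x̄(t)) is differentiable and d/dt V(x̄(t)) = − Σ_{i=1}^n ‖ẋ_i(t)‖² ≤ 0 for every t ∈ [0, T); in particular V is nonincreasing along solutions, and d/dt V(x̄(t)) = 0 if and only if ẋ_i(t) = 0 for all i. -/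
/-!
Differentiating `V(x̄(t))` term by term, the pair `i < j` contributes
`-⟪F_ij, ẋ_i - ẋ_j⟫`, where `F_ij = f(‖r_ij‖) r̂_ij` since `P' = -f`. The pair forces are
antisymmetric, `F_ji = -F_ij`, so summing over pairs regroups into `-Σ_i ⟪Σ_{j≠i} F_ij, ẋ_i⟫`,
and along the dynamics `Σ_{j≠i} F_ij = ẋ_i`. Monotonicity then follows from the mean value
theorem.
-/

open scoped RealInnerProductSpace
open Finset

theorem Finset.sum_sum_lt_add_swap {ι M : Type*} [Fintype ι] [LinearOrder ι] [AddCommMonoid M]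
    (a : ι → ι → M) :
    ∑ i, ∑ j with i < j, (a i j + a j i) = ∑ i, ∑ j with j ≠ i, a i j := by
  have hswap : ∑ i, ∑ j with i < j, a j i = ∑ i, ∑ j with j < i, a i j := by
    simp only [sum_filter]
    exact sum_comm
  simp only [sum_add_distrib, hswap]
  simp only [sum_filter, ← sum_add_distrib]
  refine sum_congr rfl fun i _ => sum_congr rfl fun j _ => ?_
  rcases lt_trichotomy i j with h | rfl | h
  · simp [h, h.not_gt, h.ne']
  · simp
  · simp [h, h.not_gt, h.ne]

section InnerProductSpace

variable {E : Type*} [NormedAddCommGroup E] [InnerProductSpace ℝ E]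

theorem sum_sum_lt_inner_sub_of_antisymm {ι : Type*} [Fintype ι] [LinearOrder ι]
    (F : ι → ι → E) (hF : ∀ i j, F j i = -F i j) (v : ι → E) :
    ∑ i, ∑ j with i < j, ⟪F i j, v i - v j⟫ = ∑ i, ⟪∑ j with j ≠ i, F i j, v i⟫ := by
  simp only [sum_inner]
  rw [← sum_sum_lt_add_swap]
  refine sum_congr rfl fun i _ => sum_congr rfl fun j _ => ?_
  rw [hF i j, inner_sub_right, inner_neg_left, sub_eq_add_neg]

theorem HasDerivAt.norm_of_ne_zero {g : ℝ → E} {g' : E} {t : ℝ} (hg : HasDerivAt g g' t)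
    (h0 : g t ≠ 0) : HasDerivAt (fun s => ‖g s‖) ⟪‖g t‖⁻¹ • g t, g'⟫ t := by
  have h := hg.norm_sq.sqrt (by positivity)
  simp only [Real.sqrt_sq (norm_nonneg _)] at h
  convert h using 1
  rw [real_inner_smul_left]
  field_simp

noncomputable def pairForce {ι : Type*} (f : ℝ → ℝ) (y : ι → E) (i j : ι) : E :=
  f ‖y i - y j‖ • (‖y i - y j‖⁻¹ • (y i - y j))

theorem pairForce_swap {ι : Type*} (f : ℝ → ℝ) (y : ι → E) (i j : ι) :
    pairForce f y j i = -pairForce f y i j := by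
  rw [pairForce, pairForce, ← neg_sub (y i), norm_neg, smul_neg, smul_neg]

variable {P f : ℝ → ℝ}

theorem HasDerivAt.comp_norm_sub (hP : ∀ z, HasDerivAt P (-f z) z) {a b : ℝ → E} {a' b' : E}
    {t : ℝ} (ha : HasDerivAt a a' t) (hb : HasDerivAt b b' t) (hab : a t ≠ b t) :
    HasDerivAt (fun s => P ‖a s - b s‖)
      (-⟪f ‖a t - b t‖ • (‖a t - b t‖⁻¹ • (a t - b t)), a' - b'⟫) t := by
  refine ((hP _).comp t ((ha.sub hb).norm_of_ne_zero (sub_ne_zero.mpr hab))).congr_deriv ?_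
  simp only [Pi.sub_apply, real_inner_smul_left, neg_mul]

theorem hasDerivAt_sum_pairs_comp_norm_sub {ι : Type*} [Fintype ι] [LinearOrder ι]
    (hP : ∀ z, HasDerivAt P (-f z) z) {x : ι → ℝ → E} {v : ι → E} {t : ℝ}
    (hx : ∀ i, HasDerivAt (x i) (v i) t) (hdist : ∀ i j, i ≠ j → x i t ≠ x j t) :
    HasDerivAt (fun s => ∑ i, ∑ j with i < j, P ‖x i s - x j s‖)
      (-∑ i, ⟪∑ j with j ≠ i, pairForce f (x · t) i j, v i⟫) t := by
  rw [← sum_sum_lt_inner_sub_of_antisymm _ (pairForce_swap f (x · t)), ← sum_neg_distrib]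
  refine HasDerivAt.fun_sum fun i _ => ?_
  rw [← sum_neg_distrib]
  refine HasDerivAt.fun_sum fun j hj => ?_
  exact (hx i).comp_norm_sub hP (hx j) (hdist i j (mem_filter.mp hj).2.ne)

end InnerProductSpace

theorem antitoneOn_of_hasDerivAt_nonpos {D : Set ℝ} (hD : Convex ℝ D) {g g' : ℝ → ℝ}
    (hg : ∀ t ∈ D, HasDerivAt g (g' t) t) (hg' : ∀ t ∈ D, g' t ≤ 0) : AntitoneOn g D :=
  antitoneOn_of_hasDerivWithinAt_nonpos hD
    (fun t ht => (hg t ht).continuousAt.continuousWithinAt)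
    (fun t ht => (hg t (interior_subset ht)).hasDerivWithinAt)
    (fun t ht => hg' t (interior_subset ht))

theorem stmt_6_general (n : ℕ) (R T : ℝ)
    (f : ℝ → ℝ) (hf : Continuous f)
    (P : ℝ → ℝ) (hP : ∀ z, P z = -∫ y in R..z, f y)
    (V : (Fin n → EuclideanSpace ℝ (Fin 2)) → ℝ)
    (hV : ∀ y, V y = ∑ i : Fin n,
      ∑ j ∈ Finset.univ.filter (fun j => i < j), P ‖y i - y j‖)
    (x : Fin n → ℝ → EuclideanSpace ℝ (Fin 2))
    (u : Fin n → ℝ → EuclideanSpace ℝ (Fin 2))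
    (hu : ∀ i t, u i t = ∑ j ∈ Finset.univ.filter (fun j => j ≠ i),
        f ‖x i t - x j t‖ • (‖x i t - x j t‖⁻¹ • (x i t - x j t)))
    (hdist : ∀ t ∈ Set.Ico (0 : ℝ) T, ∀ i j : Fin n, i ≠ j → x i t ≠ x j t)
    (hdyn : ∀ i : Fin n, ∀ t ∈ Set.Ico (0 : ℝ) T, HasDerivAt (x i) (u i t) t) :
    (∀ t ∈ Set.Ico (0 : ℝ) T,
      HasDerivAt (fun s => V (fun i => x i s)) (-∑ i : Fin n, ‖u i t‖ ^ 2) t ∧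
      (-∑ i : Fin n, ‖u i t‖ ^ 2 ≤ 0) ∧
      ((-∑ i : Fin n, ‖u i t‖ ^ 2 = 0) ↔ ∀ i : Fin n, u i t = 0)) ∧
    AntitoneOn (fun t => V (fun i => x i t)) (Set.Ico 0 T) := by
  have hP' : ∀ z, HasDerivAt P (-f z) z := fun z => by
    rw [funext hP]
    exact (hf.integral_hasStrictDerivAt R z).hasDerivAt.neg
  have hderiv : ∀ t ∈ Set.Ico (0 : ℝ) T,
      HasDerivAt (fun s => V fun i => x i s) (-∑ i, ‖u i t‖ ^ 2) t := fun t ht => by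
    simp only [hV]
    convert hasDerivAt_sum_pairs_comp_norm_sub hP' (fun i => hdyn i t ht) (hdist t ht) using 1
    simp only [pairForce, ← hu, real_inner_self_eq_norm_sq]
  have hnonpos : ∀ t, -∑ i, ‖u i t‖ ^ 2 ≤ 0 := fun t =>
    neg_nonpos.mpr (sum_nonneg fun i _ => sq_nonneg _)
  refine ⟨fun t ht => ⟨hderiv t ht, hnonpos t, ?_⟩,
    antitoneOn_of_hasDerivAt_nonpos (convex_Ico 0 T) hderiv fun t _ => hnonpos t⟩
  simp [sum_eq_zero_iff_of_nonneg]

/-- Along solutions of the virtual-force dynamics, the total potential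
`V(x̄) := Σ_{i<j} P(‖x_i − x_j‖)` is differentiable in time with
`d/dt V(x̄(t)) = −Σ_i ‖ẋ_i(t)‖² ≤ 0`; in particular `V` is nonincreasing along
solutions, and the derivative vanishes iff `ẋ_i(t) = 0` for all `i`. -/
theorem stmt_6 (n : ℕ) (Ra R T : ℝ) (hRa : 0 < Ra) (hR : R ∈ Set.Ioo 0 Ra)
    (f : ℝ → ℝ) (hf : Continuous f) (hfvanish : ∀ z ≥ Ra, f z = 0)
    (P : ℝ → ℝ) (hP : ∀ z, P z = -∫ y in R..z, f y)
    (V : (Fin n → EuclideanSpace ℝ (Fin 2)) → ℝ)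
    (hV : ∀ y, V y = ∑ i : Fin n,
      ∑ j ∈ Finset.univ.filter (fun j => i < j), P ‖y i - y j‖)
    (x : Fin n → ℝ → EuclideanSpace ℝ (Fin 2))
    (u : Fin n → ℝ → EuclideanSpace ℝ (Fin 2))
    (hu : ∀ i t, u i t = ∑ j ∈ Finset.univ.filter (fun j => j ≠ i),
        f ‖x i t - x j t‖ • (‖x i t - x j t‖⁻¹ • (x i t - x j t)))
    (hdist : ∀ t ∈ Set.Ico (0 : ℝ) T, ∀ i j : Fin n, i ≠ j → x i t ≠ x j t)
    (hdyn : ∀ i : Fin n, ∀ t ∈ Set.Ico (0 : ℝ) T, HasDerivAt (x i) (u i t) t) :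
    (∀ t ∈ Set.Ico (0 : ℝ) T,
      HasDerivAt (fun s => V (fun i => x i s)) (-∑ i : Fin n, ‖u i t‖ ^ 2) t ∧
      (-∑ i : Fin n, ‖u i t‖ ^ 2 ≤ 0) ∧
      ((-∑ i : Fin n, ‖u i t‖ ^ 2 = 0) ↔ ∀ i : Fin n, u i t = 0)) ∧
    AntitoneOn (fun t => V (fun i => x i t)) (Set.Ico 0 T) :=
  stmt_6_general n R T f hf P hP V hV x u hu hdist hdyn
end

section
/- Let R_a > 0, R ∈ (0, R_a), and let f : ℝ → ℝ be continuous with f(z) = 0 for all z ≥ R_a. Define P(z) := −∫_R^z f(y) dy and V(x̄) := Σ_{1 ≤ i < j ≤ n} P(‖x_i − x_j‖). Then at every configuration x̄ of pairwise-distinct points, the derivative of V in the direction of the virtual-force vector field equals minus the squared norm of the vector field: Σ_{i=1}^n ⟨∇_{x_i} V(x̄), u_i(x̄)⟩ = − Σ_{i=1}^n ‖u_i(x̄)‖², where u_i(x̄) = Σ_{j ≠ i} f(‖r_ij‖) · r̂_ij. -/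
/-!
Moving only agent `i`, the pair terms of `V` that change are `P ‖y - x j‖` for `j ≠ i`, and by the
fundamental theorem of calculus `P' = -f`, so the gradient of such a term at `x i` is
`-f ‖r_ij‖ • r̂_ij`. Summing, `∇_{x_i} V = -u_i`, hence `⟨∇_{x_i} V, u_i⟩ = -‖u_i‖²`.
-/

open InnerProductSpace Finset Function

section Calculus

variable {F : Type*} [NormedAddCommGroup F] [InnerProductSpace ℝ F]

theorem hasFDerivAt_norm_of_ne_zero {x : F} (hx : x ≠ 0) :
    HasFDerivAt (‖·‖) (innerSL ℝ (‖x‖⁻¹ • x)) x := by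
  have h := (hasStrictFDerivAt_norm_sq x).hasFDerivAt.sqrt (by positivity)
  simp only [Real.sqrt_sq_eq_abs, abs_norm] at h
  refine h.congr_fderiv ?_
  ext v
  simp
  field_simp

theorem HasDerivAt.hasFDerivAt_comp_norm_sub {P : ℝ → ℝ} {p : ℝ} {a b : F} (hab : b ≠ a)
    (hP : HasDerivAt P p ‖b - a‖) :
    HasFDerivAt (fun y => P ‖y - a‖) (innerSL ℝ (p • ‖b - a‖⁻¹ • (b - a))) b := by
  have hnorm := (hasFDerivAt_norm_of_ne_zero (sub_ne_zero.mpr hab)).comp b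
    ((hasFDerivAt_id b).sub_const a)
  refine (hP.comp_hasFDerivAt b hnorm).congr_fderiv ?_
  ext v
  simp

end Calculus

theorem sum_sum_lt_ite_eq_sum_ne {ι M : Type*} [Fintype ι] [LinearOrder ι] [AddCommMonoid M]
    (i : ι) (a : ι → M) :
    ∑ k, ∑ l ∈ univ.filter (k < ·), (if k = i then a l else if l = i then a k else 0) =
      ∑ j ∈ univ.filter (· ≠ i), a j := by
  have hsplit : ∀ k, ∀ l ∈ univ.filter (k < ·),
      (if k = i then a l else if l = i then a k else 0) =
        (if k = i then a l else 0) + (if l = i then a k else 0) := by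
    intro k l hl
    rcases eq_or_ne k i with rfl | hk
    · simp [(mem_filter.mp hl).2.ne']
    · simp [hk]
  simp only [sum_congr rfl (hsplit _), sum_add_distrib, sum_ite_eq', mem_filter,
    mem_univ, true_and]
  rw [sum_eq_single i (fun k _ hk => by simp [hk]) (by simp)]
  simp only [↓reduceIte]
  rw [← sum_filter,
    ← sum_union (disjoint_filter.mpr fun j _ hij hji => lt_asymm hij hji)]
  congr 1
  ext j
  simp [eq_comm]

section PairPotential

variable {ι F : Type*} [LinearOrder ι] [NormedAddCommGroup F] [InnerProductSpace ℝ F]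
  {P P' : ℝ → ℝ} {x : ι → F} {i : ι}

theorem hasFDerivAt_pair_update (hP : ∀ z, 0 < z → HasDerivAt P (P' z) z)
    (hx : ∀ j ≠ i, x j ≠ x i) {k l : ι} (hkl : k ≠ l) :
    HasFDerivAt (fun y => P ‖update x i y k - update x i y l‖)
      (innerSL ℝ (if k = i then P' ‖x i - x l‖ • ‖x i - x l‖⁻¹ • (x i - x l)
        else if l = i then P' ‖x i - x k‖ • ‖x i - x k‖⁻¹ • (x i - x k) else 0)) (x i) := by
  have hterm : ∀ j ≠ i, HasFDerivAt (fun y => P ‖y - x j‖)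
      (innerSL ℝ (P' ‖x i - x j‖ • ‖x i - x j‖⁻¹ • (x i - x j))) (x i) := fun j hj =>
    (hP _ (norm_pos_iff.mpr (sub_ne_zero.mpr (hx j hj).symm))).hasFDerivAt_comp_norm_sub
      (hx j hj).symm
  by_cases hk : k = i
  · subst hk
    simpa [update_of_ne hkl.symm] using hterm l hkl.symm
  by_cases hl : l = i
  · subst hl
    simpa [update_of_ne hk, hk, norm_sub_rev (x k)] using hterm k hk
  simpa [update_of_ne hk, update_of_ne hl, hk, hl] using hasFDerivAt_const _ (x i)

theorem hasGradientAt_sum_pairs_update [Fintype ι] [CompleteSpace F]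
    (hP : ∀ z, 0 < z → HasDerivAt P (P' z) z) (hx : ∀ j ≠ i, x j ≠ x i) :
    HasGradientAt (fun y => ∑ k, ∑ l ∈ univ.filter (k < ·), P ‖update x i y k - update x i y l‖)
      (∑ j ∈ univ.filter (· ≠ i), P' ‖x i - x j‖ • ‖x i - x j‖⁻¹ • (x i - x j)) (x i) := by
  rw [hasGradientAt_iff_hasFDerivAt, ← sum_sum_lt_ite_eq_sum_ne]
  refine (HasFDerivAt.fun_sum fun k _ => HasFDerivAt.fun_sum fun l hl =>
    hasFDerivAt_pair_update hP hx (ne_of_lt (mem_filter.mp hl).2)).congr_fderiv ?_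
  ext v
  simp only [toDual_apply_apply, _root_.sum_apply, innerSL_apply_apply, sum_inner]

end PairPotential

theorem stmt_7_general (n : ℕ) (R : ℝ)
    (f : ℝ → ℝ) (hf : Continuous f)
    (P : ℝ → ℝ) (hP : ∀ z, P z = -∫ y in R..z, f y)
    (V : (Fin n → EuclideanSpace ℝ (Fin 2)) → ℝ)
    (hV : ∀ y, V y = ∑ i : Fin n,
      ∑ j ∈ Finset.univ.filter (fun j => i < j), P ‖y i - y j‖)
    (x : Fin n → EuclideanSpace ℝ (Fin 2))
    (hx : ∀ i j : Fin n, i ≠ j → x i ≠ x j)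
    (u : Fin n → EuclideanSpace ℝ (Fin 2))
    (hu : ∀ i, u i = ∑ j ∈ Finset.univ.filter (fun j => j ≠ i),
        f ‖x i - x j‖ • (‖x i - x j‖⁻¹ • (x i - x j))) :
    ∑ i : Fin n,
      (inner ℝ (gradient (fun y => V (Function.update x i y)) (x i)) (u i) : ℝ)
      = -∑ i : Fin n, ‖u i‖ ^ 2 := by
  have hP' : ∀ z, 0 < z → HasDerivAt P (-f z) z := fun z _ => by
    rw [funext hP]
    exact (hf.integral_hasStrictDerivAt R z).hasDerivAt.neg
  have hgrad : ∀ i, gradient (fun y => V (update x i y)) (x i) = -u i := fun i => by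
    simp only [hV, hu i, ← sum_neg_distrib, ← neg_smul]
    exact (hasGradientAt_sum_pairs_update hP' fun j hj => hx j i hj).gradient
  simp only [hgrad, inner_neg_left, real_inner_self_eq_norm_sq, sum_neg_distrib]

/-- At every configuration of pairwise-distinct points, the derivative of
the total potential `V` in the direction of the virtual-force vector field `u` equals
minus the squared norm of the vector field:
`Σ_i ⟨∇_{x_i} V(x̄), u_i(x̄)⟩ = −Σ_i ‖u_i(x̄)‖²`. -/
theorem stmt_7 (n : ℕ) (Ra R : ℝ) (hRa : 0 < Ra) (hR : R ∈ Set.Ioo 0 Ra)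
    (f : ℝ → ℝ) (hf : Continuous f) (hfvanish : ∀ z ≥ Ra, f z = 0)
    (P : ℝ → ℝ) (hP : ∀ z, P z = -∫ y in R..z, f y)
    (V : (Fin n → EuclideanSpace ℝ (Fin 2)) → ℝ)
    (hV : ∀ y, V y = ∑ i : Fin n,
      ∑ j ∈ Finset.univ.filter (fun j => i < j), P ‖y i - y j‖)
    (x : Fin n → EuclideanSpace ℝ (Fin 2))
    (hx : ∀ i j : Fin n, i ≠ j → x i ≠ x j)
    (u : Fin n → EuclideanSpace ℝ (Fin 2))
    (hu : ∀ i, u i = ∑ j ∈ Finset.univ.filter (fun j => j ≠ i),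
        f ‖x i - x j‖ • (‖x i - x j‖⁻¹ • (x i - x j))) :
    ∑ i : Fin n,
      (inner ℝ (gradient (fun y => V (Function.update x i y)) (x i)) (u i) : ℝ)
      = -∑ i : Fin n, ‖u i‖ ^ 2 :=
  stmt_7_general n R f hf P hP V hV x hx u hu
end

section
/- Let 0 < R < R_a and let f : ℝ → ℝ be continuous on [0, R_a] with f(z) > 0 for z ∈ [0, R), f(R) = 0, and f(z) < 0 for z ∈ (R, R_a], and set P(z) := −∫_R^z f(y) dy. Fix a reference point x*_c ∈ ℝ² and define, for a configuration x̄ = (x_1, …, x_n) of pairwise-distinct points with center x_c := (1/n) Σ_{i=1}^n x_i, the Lyapunov function V(x̄) := ‖x*_c − x_c‖² + Σ_{1 ≤ i < j ≤ n, ‖x_i − x_j‖ ≤ R_a} P(‖x_i − x_j‖). Then V(x̄) ≥ 0 for every such configuration, and V(x̄) = 0 if and only if x_c = x*_c and every pair i < j with ‖x_i − x_j‖ ≤ R_a satisfies ‖x_i − x_j‖ = R. -/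
section aux

variable (R Ra : ℝ) (f : ℝ → ℝ)

lemma stmt9_Ppos (hR : 0 < R) (hRRa : R < Ra)
    (hcont : ContinuousOn f (Set.Icc 0 Ra))
    (hpos : ∀ z, 0 ≤ z → z < R → 0 < f z)
    (hneg : ∀ z, R < z → z ≤ Ra → f z < 0)
    (P : ℝ → ℝ) (hP : ∀ z, P z = -∫ y in R..z, f y)
    (z : ℝ) (hz0 : 0 < z) (hzRa : z ≤ Ra) (hzR : z ≠ R) : 0 < P z := by
  have hint : IntervalIntegrable f MeasureTheory.volume R z := by
    apply (hcont.mono ?_).intervalIntegrable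
    intro t ht
    rcases Set.mem_uIcc.mp ht with h | h
    · exact ⟨le_of_lt (lt_of_lt_of_le hR h.1), le_trans h.2 hzRa⟩
    · exact ⟨le_of_lt (lt_of_lt_of_le hz0 h.1), le_trans h.2 hRRa.le⟩
  rcases lt_or_gt_of_ne hzR with h | h
  · -- z < R : P z = ∫ z..R f > 0
    rw [hP, ← intervalIntegral.integral_symm]
    apply intervalIntegral.intervalIntegral_pos_of_pos_on hint.symm _ h
    intro t ht
    exact hpos t (le_of_lt (lt_trans hz0 ht.1)) ht.2
  · -- R < z : P z = ∫ R..z (-f) > 0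
    rw [hP, ← intervalIntegral.integral_neg]
    apply intervalIntegral.intervalIntegral_pos_of_pos_on hint.neg _ h
    intro t ht
    simpa using hneg t ht.1 (le_of_lt (lt_of_lt_of_le ht.2 hzRa))

end aux

/-- The Lyapunov function
`V(x̄) := ‖x*_c − x_c‖² + Σ_{i<j, ‖x_i − x_j‖ ≤ R_a} P(‖x_i − x_j‖)` is nonnegative on
configurations of pairwise-distinct points, and vanishes iff the center coincides with
the reference point `x*_c` and every link has length exactly `R`. -/
theorem stmt_9 (n : ℕ) (hn : 0 < n) (R Ra : ℝ) (hR : 0 < R) (hRRa : R < Ra)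
    (f : ℝ → ℝ) (hcont : ContinuousOn f (Set.Icc 0 Ra))
    (hpos : ∀ z, 0 ≤ z → z < R → 0 < f z)
    (hfR : f R = 0)
    (hneg : ∀ z, R < z → z ≤ Ra → f z < 0)
    (P : ℝ → ℝ) (hP : ∀ z, P z = -∫ y in R..z, f y)
    (xsc : EuclideanSpace ℝ (Fin 2))
    (V : (Fin n → EuclideanSpace ℝ (Fin 2)) → ℝ)
    (hV : ∀ y, V y = ‖xsc - (n : ℝ)⁻¹ • ∑ i : Fin n, y i‖ ^ 2 +
      ∑ i : Fin n, ∑ j ∈ Finset.univ.filter (fun j => i < j ∧ ‖y i - y j‖ ≤ Ra),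
        P ‖y i - y j‖) :
    ∀ x : Fin n → EuclideanSpace ℝ (Fin 2), (∀ i j : Fin n, i ≠ j → x i ≠ x j) →
      (0 ≤ V x ∧
       (V x = 0 ↔ ((n : ℝ)⁻¹ • ∑ i : Fin n, x i = xsc ∧
          ∀ i j : Fin n, i < j → ‖x i - x j‖ ≤ Ra → ‖x i - x j‖ = R))) := by
  have hPR : P R = 0 := by simp [hP]
  intro x hdist
  -- each P term is nonneg, and zero iff the length is R
  have key : ∀ i j : Fin n, i < j → ‖x i - x j‖ ≤ Ra →
      (0 ≤ P ‖x i - x j‖ ∧ (P ‖x i - x j‖ = 0 ↔ ‖x i - x j‖ = R)) := by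
    intro i j hij hle
    have hnz : x i - x j ≠ 0 := sub_ne_zero.mpr (hdist i j (ne_of_lt hij))
    have hn0 : 0 < ‖x i - x j‖ := norm_pos_iff.mpr hnz
    by_cases hzR : ‖x i - x j‖ = R
    · refine ⟨by rw [hzR, hPR], by rw [hzR, hPR]; simp⟩
    · have := stmt9_Ppos R Ra f hR hRRa hcont hpos hneg P hP _ hn0 hle hzR
      exact ⟨this.le, by constructor <;> intro h <;> [exact absurd h (ne_of_gt this); exact absurd h hzR]⟩
  have hterm : ∀ i : Fin n, ∀ j ∈ Finset.univ.filter
      (fun j => i < j ∧ ‖x i - x j‖ ≤ Ra), 0 ≤ P ‖x i - x j‖ := by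
    intro i j hj
    rw [Finset.mem_filter] at hj
    exact (key i j hj.2.1 hj.2.2).1
  have hsum : 0 ≤ ∑ i : Fin n, ∑ j ∈ Finset.univ.filter
      (fun j => i < j ∧ ‖x i - x j‖ ≤ Ra), P ‖x i - x j‖ :=
    Finset.sum_nonneg fun i _ => Finset.sum_nonneg (hterm i)
  have hnorm : (0:ℝ) ≤ ‖xsc - (n : ℝ)⁻¹ • ∑ i : Fin n, x i‖ ^ 2 := sq_nonneg _
  constructor
  · rw [hV]; exact add_nonneg hnorm hsum
  · rw [hV]
    rw [add_eq_zero_iff_of_nonneg hnorm hsum]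
    constructor
    · rintro ⟨h1, h2⟩
      constructor
      · have : xsc - (n : ℝ)⁻¹ • ∑ i : Fin n, x i = 0 := by
          simpa [pow_eq_zero_iff] using h1
        exact (sub_eq_zero.mp this).symm
      · intro i j hij hle
        rw [Finset.sum_eq_zero_iff_of_nonneg
          (fun i _ => Finset.sum_nonneg (hterm i))] at h2
        have := h2 i (Finset.mem_univ i)
        rw [Finset.sum_eq_zero_iff_of_nonneg (hterm i)] at this
        have := this j (Finset.mem_filter.mpr ⟨Finset.mem_univ j, hij, hle⟩)
        exact (key i j hij hle).2.mp this
    · rintro ⟨h1, h2⟩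
      constructor
      · rw [h1]; simp
      · apply Finset.sum_eq_zero
        intro i _
        apply Finset.sum_eq_zero
        intro j hj
        rw [Finset.mem_filter] at hj
        rw [h2 i j hj.2.1 hj.2.2, hPR]
end
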